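/- arXiv:2509.10580 — 5 statements merged into one kernel-verified Lean document; each statement's English description precedes it below -/
import Mathlib

section
/- Let A be an n×n real matrix whose rows a_1,…,a_n have unit Euclidean norm, and suppose A is tie-free. Then β(A) ≤ 2 Σ_{i=1}^n √(W1[1_{S_i(A)}]), where 1_{S_i(A)} is the indicator function of the cell S_i(A). -/
/-! A vertex `x` attains `‖Ax‖_∞` at some row `i`, where `⟨a_i, x⟩ = ±‖Ax‖_∞`; so `x` or `-x`
lies in `S_i(A)`, and as `‖A(-x)‖_∞ = ‖Ax‖_∞`, `β(A)` is at most twice the sum over `i` of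
`2^{-n} ∑_{x ∈ S_i} ⟨a_i, x⟩`. That sum is `⟨a_i, v_i⟩`, where `v_i` is the vector of level-1
Fourier coefficients of `1_{S_i}`, and Cauchy–Schwarz with `‖a_i‖ = 1` bounds it by
`‖v_i‖ = √(W1[1_{S_i}])`. -/

open Finset

noncomputable section
open scoped Classical

/-- The sign `±1` associated to a Boolean. -/
def sgn (b : Bool) : ℝ := if b then 1 else -1

/-- The hypercube `{-1,1}^n` as a finite set of vectors in `ℝ^n`. -/
def cube (n : ℕ) : Finset (Fin n → ℝ) :=
  (Finset.univ : Finset (Fin n → Bool)).image (fun ε i => sgn (ε i))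

/-- `β(A) = 2^{-n} ∑_{x ∈ {-1,1}^n} ‖Ax‖_∞` (the `Pi` norm on `Fin n → ℝ` is the sup norm). -/
def badBeta {n : ℕ} (A : Matrix (Fin n) (Fin n) ℝ) : ℝ :=
  (2 ^ n : ℝ)⁻¹ * ∑ x ∈ cube n, ‖A.mulVec x‖

/-- The cell `S_i(A) = {x ∈ {-1,1}^n : ‖Ax‖_∞ = ⟨a_i, x⟩}`. -/
def cellS {n : ℕ} (A : Matrix (Fin n) (Fin n) ℝ) (i : Fin n) : Finset (Fin n → ℝ) :=
  (cube n).filter (fun x => ‖A.mulVec x‖ = ∑ j, A i j * x j)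

/-- `A` is tie-free: no two distinct rows attain the same absolute inner product with a
hypercube vertex. -/
def TieFree {n : ℕ} (A : Matrix (Fin n) (Fin n) ℝ) : Prop :=
  ∀ x ∈ cube n, ∀ i j : Fin n, i ≠ j →
    (∑ k, A i k * x k) ^ 2 ≠ (∑ k, A j k * x k) ^ 2

/-- Level-1 Fourier weight of `f : {-1,1}^n → ℝ`. -/
def W1 {n : ℕ} (f : (Fin n → ℝ) → ℝ) : ℝ :=
  ∑ i : Fin n, ((2 ^ n : ℝ)⁻¹ * ∑ x ∈ cube n, f x * x i) ^ 2

lemma Pi.exists_norm_eq_norm_apply {ι E : Type*} [Fintype ι] [Nonempty ι]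
    [SeminormedAddGroup E] (f : ι → E) : ∃ i, ‖f‖ = ‖f i‖ := by
  obtain ⟨i, -, hi⟩ := Finset.exists_mem_eq_sup univ univ_nonempty fun b => ‖f b‖₊
  exact ⟨i, by rw [Pi.norm_def, hi, coe_nnnorm]⟩

section SumLemmas

variable {α ι M : Type*} [DecidableEq α] [AddCommMonoid M] [PartialOrder M]
  [IsOrderedAddMonoid M] {f : α → M}

lemma Finset.sum_union_le_of_nonneg (hf : ∀ x, 0 ≤ f x) (s t : Finset α) :
    ∑ x ∈ s ∪ t, f x ≤ ∑ x ∈ s, f x + ∑ x ∈ t, f x := by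
  rw [← sum_union_inter]
  exact le_add_of_nonneg_right (sum_nonneg fun x _ => hf x)

lemma Finset.sum_biUnion_le_of_nonneg (hf : ∀ x, 0 ≤ f x) (s : Finset ι) (t : ι → Finset α) :
    ∑ x ∈ s.biUnion t, f x ≤ ∑ i ∈ s, ∑ x ∈ t i, f x := by
  classical
  induction s using Finset.induction_on with
  | empty => simp
  | insert i s hi ih =>
    rw [biUnion_insert, sum_insert hi]
    exact (sum_union_le_of_nonneg hf _ _).trans (add_le_add le_rfl ih)

end SumLemmas

lemma Finset.sum_le_two_mul_sum_of_subset_union_image_neg {G : Type*} [AddGroup G]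
    [DecidableEq G] {f : G → ℝ} (hf : ∀ x, 0 ≤ f x) (heven : ∀ x, f (-x) = f x)
    {s t : Finset G} (hst : s ⊆ t ∪ t.image Neg.neg) :
    ∑ x ∈ s, f x ≤ 2 * ∑ x ∈ t, f x :=
  calc ∑ x ∈ s, f x
      ≤ ∑ x ∈ t ∪ t.image Neg.neg, f x := sum_le_sum_of_subset_of_nonneg hst fun x _ _ => hf x
    _ ≤ ∑ x ∈ t, f x + ∑ x ∈ t.image Neg.neg, f x := sum_union_le_of_nonneg hf _ _
    _ = 2 * ∑ x ∈ t, f x := by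
      rw [sum_image neg_injective.injOn, two_mul]
      simp only [heven]

lemma neg_mem_cube {n : ℕ} {x : Fin n → ℝ} (hx : x ∈ cube n) : -x ∈ cube n := by
  simp only [cube, Finset.mem_image] at hx ⊢
  obtain ⟨ε, -, rfl⟩ := hx
  refine ⟨fun i => !ε i, Finset.mem_univ _, ?_⟩
  funext i
  cases h : ε i <;> simp [sgn, h]

lemma exists_mem_cellS_or_neg_mem_cellS {n : ℕ} [NeZero n] (A : Matrix (Fin n) (Fin n) ℝ)
    {x : Fin n → ℝ} (hx : x ∈ cube n) : ∃ i, x ∈ cellS A i ∨ -x ∈ cellS A i := by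
  obtain ⟨i, hi⟩ := Pi.exists_norm_eq_norm_apply (A.mulVec x)
  refine ⟨i, ?_⟩
  simp only [cellS, mem_filter, Matrix.mulVec_neg, norm_neg, Pi.neg_apply, mul_neg,
    sum_neg_distrib, neg_mem_cube hx, hx, true_and, hi, Real.norm_eq_abs]
  exact abs_choice _

lemma sum_cube_le_two_mul_sum_cellS {n : ℕ} [NeZero n] (A : Matrix (Fin n) (Fin n) ℝ) :
    ∑ x ∈ cube n, ‖A.mulVec x‖ ≤ 2 * ∑ i, ∑ x ∈ cellS A i, ‖A.mulVec x‖ := by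
  have hcover : cube n ⊆ univ.biUnion (cellS A) ∪ (univ.biUnion (cellS A)).image Neg.neg := by
    intro x hx
    obtain ⟨i, hi | hi⟩ := exists_mem_cellS_or_neg_mem_cellS A hx
    · exact mem_union_left _ (mem_biUnion.2 ⟨i, mem_univ _, hi⟩)
    · exact mem_union_right _ (mem_image.2 ⟨-x, mem_biUnion.2 ⟨i, mem_univ _, hi⟩, neg_neg x⟩)
  calc ∑ x ∈ cube n, ‖A.mulVec x‖
      ≤ 2 * ∑ x ∈ univ.biUnion (cellS A), ‖A.mulVec x‖ :=
        sum_le_two_mul_sum_of_subset_union_image_neg (fun _ => norm_nonneg _)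
          (fun x => by rw [Matrix.mulVec_neg, norm_neg]) hcover
    _ ≤ 2 * ∑ i, ∑ x ∈ cellS A i, ‖A.mulVec x‖ := by
        gcongr
        exact sum_biUnion_le_of_nonneg (fun _ => norm_nonneg _) _ _

lemma W1_indicator {n : ℕ} {S : Finset (Fin n → ℝ)} (hS : S ⊆ cube n) :
    W1 (fun x => if x ∈ S then (1 : ℝ) else 0) = ∑ j, ((2 ^ n : ℝ)⁻¹ * ∑ x ∈ S, x j) ^ 2 := by
  simp only [W1, ite_mul, one_mul, zero_mul, ← sum_filter, filter_mem_eq_inter,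
    inter_eq_right.2 hS]

lemma inv_two_pow_mul_sum_cellS_le_sqrt_W1 {n : ℕ} (A : Matrix (Fin n) (Fin n) ℝ) (i : Fin n)
    (hrow : ∑ j, (A i j) ^ 2 = 1) :
    (2 ^ n : ℝ)⁻¹ * ∑ x ∈ cellS A i, ‖A.mulVec x‖ ≤
      Real.sqrt (W1 (fun x => if x ∈ cellS A i then (1 : ℝ) else 0)) := by
  have hlinear : (2 ^ n : ℝ)⁻¹ * ∑ x ∈ cellS A i, ‖A.mulVec x‖
      = ∑ j, A i j * ((2 ^ n : ℝ)⁻¹ * ∑ x ∈ cellS A i, x j) := by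
    have hcell : ∀ x ∈ cellS A i, ‖A.mulVec x‖ = ∑ j, A i j * x j := fun x hx =>
      (mem_filter.1 hx).2
    rw [sum_congr rfl hcell, sum_comm]
    simp only [mul_sum, mul_left_comm]
  calc (2 ^ n : ℝ)⁻¹ * ∑ x ∈ cellS A i, ‖A.mulVec x‖
      = ∑ j, A i j * ((2 ^ n : ℝ)⁻¹ * ∑ x ∈ cellS A i, x j) := hlinear
    _ ≤ Real.sqrt (∑ j, (A i j) ^ 2)
        * Real.sqrt (∑ j, ((2 ^ n : ℝ)⁻¹ * ∑ x ∈ cellS A i, x j) ^ 2) :=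
        Real.sum_mul_le_sqrt_mul_sqrt _ _ _
    _ = Real.sqrt (W1 (fun x => if x ∈ cellS A i then (1 : ℝ) else 0)) := by
        rw [hrow, Real.sqrt_one, one_mul, W1_indicator (S := cellS A i) (filter_subset _ _)]

theorem stmt0_general {n : ℕ} (A : Matrix (Fin n) (Fin n) ℝ)
    (hrows : ∀ i, ∑ j, (A i j) ^ 2 = 1) :
    badBeta A ≤
      2 * ∑ i : Fin n, Real.sqrt (W1 (fun x => if x ∈ cellS A i then (1 : ℝ) else 0)) := by
  rcases n.eq_zero_or_pos with rfl | hn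
  · simp [badBeta, norm_of_subsingleton]
  have : NeZero n := ⟨hn.ne'⟩
  calc badBeta A = (2 ^ n : ℝ)⁻¹ * ∑ x ∈ cube n, ‖A.mulVec x‖ := rfl
    _ ≤ (2 ^ n : ℝ)⁻¹ * (2 * ∑ i, ∑ x ∈ cellS A i, ‖A.mulVec x‖) := by
        gcongr
        exact sum_cube_le_two_mul_sum_cellS A
    _ = 2 * ∑ i, (2 ^ n : ℝ)⁻¹ * ∑ x ∈ cellS A i, ‖A.mulVec x‖ := by
        rw [mul_left_comm, mul_sum]
    _ ≤ _ := by
        gcongr with i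
        exact inv_two_pow_mul_sum_cellS_le_sqrt_W1 A i (hrows i)

theorem stmt0 {n : ℕ} (A : Matrix (Fin n) (Fin n) ℝ)
    (hrows : ∀ i, ∑ j, (A i j) ^ 2 = 1) (htie : TieFree A) :
    badBeta A ≤
      2 * ∑ i : Fin n, Real.sqrt (W1 (fun x => if x ∈ cellS A i then (1 : ℝ) else 0)) :=
  stmt0_general A hrows
end
end

section
/- Let n ≥ 1 and let α_1, …, α_n be nonnegative reals with α_i ≤ 1/2 for all i and Σ_{i=1}^n α_i = 1/2. Then Σ_{i=1}^n α_i·√(2·log(1/α_i)) ≤ (1/2)·√(2·log(2n)) (with the convention 0·√(2·log(1/0)) = 0), and equality holds if and only if α_i = 1/(2n) for every i. -/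
open Finset Real

/-!
By Cauchy–Schwarz with weights `αᵢ`, `(∑ αᵢ √(2 log(1/αᵢ)))² ≤ (∑ αᵢ) · ∑ 2 αᵢ log(1/αᵢ)`, and
since `∑ αᵢ = ½` the right side is the entropy `∑ αᵢ log(1/αᵢ)` of the weights. Jensen's inequality
for the strictly concave `x ↦ -x log x` bounds this entropy by its value `½ log(2n)` at the uniform
weights, strictly unless the weights are uniform.
-/

lemma sq_sum_mul_sqrt_le {ι : Type*} (s : Finset ι) {w f : ι → ℝ} (hw : ∀ i ∈ s, 0 ≤ w i)
    (hf : ∀ i ∈ s, 0 ≤ f i) :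
    (∑ i ∈ s, w i * √(f i)) ^ 2 ≤ (∑ i ∈ s, w i) * ∑ i ∈ s, w i * f i :=
  sum_sq_le_sum_mul_sum_of_sq_le_mul s hw (fun i hi => mul_nonneg (hw i hi) (hf i hi))
    fun i hi => by rw [mul_pow, sq_sqrt (hf i hi), sq, mul_assoc]

section Entropy

variable {ι : Type*} [Fintype ι] {p : ι → ℝ}

lemma sum_smul_card_inv (g : ι → ℝ) :
    ∑ i, (Fintype.card ι : ℝ)⁻¹ • g i = (∑ i, g i) / Fintype.card ι := by
  rw [← smul_sum, smul_eq_mul, inv_mul_eq_div]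

lemma sum_card_inv_eq_one [Nonempty ι] : ∑ _i : ι, (Fintype.card ι : ℝ)⁻¹ = 1 := by
  rw [sum_const, card_univ, nsmul_eq_mul, mul_inv_cancel₀ (by positivity)]

lemma sum_negMulLog_le [Nonempty ι] (hp : ∀ i, 0 ≤ p i) :
    ∑ i, negMulLog (p i) ≤ Fintype.card ι * negMulLog ((∑ i, p i) / Fintype.card ι) := by
  have := concaveOn_negMulLog.le_map_sum (t := univ) (fun _ _ => by positivity)
    sum_card_inv_eq_one fun i _ => Set.mem_Ici.2 (hp i)
  rwa [sum_smul_card_inv, sum_smul_card_inv, div_le_iff₀' (by positivity)] at this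

lemma sum_negMulLog_lt_iff [Nonempty ι] (hp : ∀ i, 0 ≤ p i) :
    ∑ i, negMulLog (p i) < Fintype.card ι * negMulLog ((∑ i, p i) / Fintype.card ι) ↔
      ∃ j, p j ≠ (∑ i, p i) / Fintype.card ι := by
  have := strictConcaveOn_negMulLog.lt_map_sum_iff_of_pos' (t := univ)
    (fun _ _ => by positivity) sum_card_inv_eq_one fun i _ => Set.mem_Ici.2 (hp i)
  rw [sum_smul_card_inv, sum_smul_card_inv, div_lt_iff₀' (by positivity)] at this
  simpa using this

end Entropy

lemma mul_log_one_div (x : ℝ) : x * log (1 / x) = negMulLog x := by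
  rw [negMulLog, one_div, log_inv]; ring

lemma sq_sum_mul_sqrt_two_mul_log_le {ι : Type*} (s : Finset ι) {p : ι → ℝ}
    (hp₀ : ∀ i ∈ s, 0 ≤ p i) (hp₁ : ∀ i ∈ s, p i ≤ 1) :
    (∑ i ∈ s, p i * √(2 * log (1 / p i))) ^ 2 ≤ 2 * (∑ i ∈ s, p i) * ∑ i ∈ s, negMulLog (p i) := by
  have hlog : ∀ i ∈ s, 0 ≤ 2 * log (1 / p i) := fun i hi => by
    rw [one_div, log_inv]
    linarith [log_nonpos (hp₀ i hi) (hp₁ i hi)]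
  calc _ ≤ (∑ i ∈ s, p i) * ∑ i ∈ s, p i * (2 * log (1 / p i)) := sq_sum_mul_sqrt_le s hp₀ hlog
    _ = _ := by simp only [mul_left_comm _ (2 : ℝ), ← mul_sum, mul_log_one_div]; ring

/-- For `α : Fin n → ℝ` nonnegative, each `≤ 1/2`, summing to `1/2`, we have
`∑ αᵢ √(2 log(1/αᵢ)) ≤ (1/2)√(2 log(2n))`, with equality iff all `αᵢ = 1/(2n)`.
(At `αᵢ = 0` the term is `0`, matching the convention, since in `ℝ` we have
`1/0 = 0`, `log 0 = 0`, `√0 = 0`.) -/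
theorem stmt5 {n : ℕ} (hn : 1 ≤ n) (α : Fin n → ℝ)
    (h0 : ∀ i, 0 ≤ α i) (h2 : ∀ i, α i ≤ 1 / 2) (hsum : ∑ i, α i = 1 / 2) :
    (∑ i, α i * Real.sqrt (2 * Real.log (1 / α i)) ≤
        (1 / 2) * Real.sqrt (2 * Real.log (2 * n))) ∧
    ((∑ i, α i * Real.sqrt (2 * Real.log (1 / α i)) =
        (1 / 2) * Real.sqrt (2 * Real.log (2 * n))) ↔ ∀ i, α i = 1 / (2 * n)) := by
  have : Nonempty (Fin n) := ⟨⟨0, hn⟩⟩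
  have hn1 : (1 : ℝ) ≤ n := by exact_mod_cast hn
  set S := ∑ i, α i * √(2 * log (1 / α i))
  set R := (1 / 2) * √(2 * log (2 * n))
  have hS : S ^ 2 ≤ ∑ i, negMulLog (α i) :=
    (sq_sum_mul_sqrt_two_mul_log_le univ (fun i _ => h0 i) fun i _ => (h2 i).trans (by norm_num))
      |>.trans_eq (by rw [hsum]; ring)
  have hmean : (∑ i, α i) / Fintype.card (Fin n) = 1 / (2 * n) := by
    rw [hsum, Fintype.card_fin]; field_simp
  have hR : Fintype.card (Fin n) * negMulLog (1 / (2 * n)) = R ^ 2 := by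
    rw [Fintype.card_fin, ← mul_log_one_div, one_div_one_div, mul_pow,
      sq_sqrt (by have := log_nonneg (by linarith : (1 : ℝ) ≤ 2 * n); positivity)]
    field_simp
  have hS0 : 0 ≤ S := sum_nonneg fun i _ => mul_nonneg (h0 i) (sqrt_nonneg _)
  have hR0 : 0 ≤ R := by positivity
  refine ⟨?_, fun hSR => ?_, fun hu => ?_⟩
  · rw [← pow_le_pow_iff_left₀ hS0 hR0 two_ne_zero, ← hR, ← hmean]
    exact hS.trans (sum_negMulLog_le h0)
  · by_contra! hnu
    rw [← hmean] at hnu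
    have := hS.trans_lt ((sum_negMulLog_lt_iff h0).2 hnu)
    rw [hmean, hR, pow_lt_pow_iff_left₀ hS0 hR0 two_ne_zero] at this
    exact this.ne hSR
  · simp only [S, R, hu, one_div_one_div, sum_const, card_univ, Fintype.card_fin, nsmul_eq_mul]
    field_simp
end

section
/- Let H be an m×m Hadamard matrix (entries in {−1,1} with H·Hᵀ = m·I_m), let n ≤ m, and for 1 ≤ i ≤ n let u_i ∈ ℝ^n denote the vector (H_{1i}, …, H_{ni})/√m, the i-th column of H truncated to its first n entries and divided by √m. Then for all i ≠ j with 1 ≤ i, j ≤ n, |⟨u_i, u_j⟩| ≤ (m − n)/m, and ‖u_i‖² = n/m for every i. -/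
/- Columns of a Hadamard matrix are orthogonal, so in `∑ r, H r i * H r j = 0` the first `n`
terms sum to minus the remaining `m - n` terms, each of which has absolute value `1`. -/

open Finset
open scoped Matrix

noncomputable section

theorem Matrix.transpose_mul_self_eq_smul_one {ι K : Type*} [Fintype ι] [DecidableEq ι]
    [Field K] {A : Matrix ι ι K} {c : K} (hc : c ≠ 0) (h : A * Aᵀ = c • 1) :
    Aᵀ * A = c • 1 := by
  have hinv : (c⁻¹ • Aᵀ) * A = 1 := mul_eq_one_comm.mp <| by
    rw [Matrix.mul_smul, h, smul_smul, inv_mul_cancel₀ hc, one_smul]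
  calc Aᵀ * A = c • ((c⁻¹ • Aᵀ) * A) := by
        rw [Matrix.smul_mul, smul_smul, mul_inv_cancel₀ hc, one_smul]
    _ = c • 1 := by rw [hinv]

theorem Matrix.sum_mul_col_eq_zero_of_mul_transpose {m : ℕ} {H : Matrix (Fin m) (Fin m) ℝ}
    (hHad : H * Hᵀ = (m : ℝ) • 1) {i j : Fin m} (hij : i ≠ j) :
    ∑ r, H r i * H r j = 0 := by
  have hm : (m : ℝ) ≠ 0 := Nat.cast_ne_zero.mpr (Fin.pos i).ne'
  simpa [Matrix.mul_apply, Matrix.one_apply, hij] using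
    congrFun (congrFun (Matrix.transpose_mul_self_eq_smul_one hm hHad) i) j

theorem abs_sum_le_card_compl_of_sum_eq_zero {ι : Type*} [Fintype ι] [DecidableEq ι]
    {f : ι → ℝ} (hf : ∀ r, |f r| ≤ 1) (h0 : ∑ r, f r = 0) (s : Finset ι) :
    |∑ r ∈ s, f r| ≤ #sᶜ := by
  have hs : ∑ r ∈ s, f r = -∑ r ∈ sᶜ, f r := by
    linarith [sum_add_sum_compl s f]
  calc |∑ r ∈ s, f r| = |∑ r ∈ sᶜ, f r| := by rw [hs, abs_neg]
    _ ≤ ∑ r ∈ sᶜ, |f r| := abs_sum_le_sum_abs _ _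
    _ ≤ ∑ _r ∈ sᶜ, (1 : ℝ) := sum_le_sum fun r _ => hf r
    _ = #sᶜ := by simp

/-- For an `m × m` Hadamard matrix `H` and `n ≤ m`, the truncated normalized columns
`u_i = (H_{1i}, …, H_{ni})/√m ∈ ℝ^n` (for `1 ≤ i ≤ n`) satisfy
`|⟨u_i, u_j⟩| ≤ (m − n)/m` for `i ≠ j`, and `‖u_i‖² = n/m`. -/
theorem stmt12 {m n : ℕ} (hnm : n ≤ m)
    (H : Matrix (Fin m) (Fin m) ℝ)
    (hent : ∀ i j, H i j = 1 ∨ H i j = -1)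
    (hHad : H * H.transpose = (m : ℝ) • (1 : Matrix (Fin m) (Fin m) ℝ)) :
    (∀ i j : Fin n, i ≠ j →
      |∑ r : Fin n, (H (Fin.castLE hnm r) (Fin.castLE hnm i) / Real.sqrt m) *
          (H (Fin.castLE hnm r) (Fin.castLE hnm j) / Real.sqrt m)| ≤ ((m : ℝ) - n) / m) ∧
    (∀ i : Fin n,
      ∑ r : Fin n, (H (Fin.castLE hnm r) (Fin.castLE hnm i) / Real.sqrt m) ^ 2 =
        (n : ℝ) / m) := by
  have habs : ∀ r c, |H r c| = 1 := fun r c => by rcases hent r c with h | h <;> simp [h]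
  have hdiv (a b : ℝ) : a / √m * (b / √m) = a * b / m := by
    rw [div_mul_div_comm, Real.mul_self_sqrt (Nat.cast_nonneg m)]
  set s := univ.map (Fin.castLEEmb hnm)
  have hsum (f : Fin m → ℝ) : ∑ r : Fin n, f (Fin.castLE hnm r) = ∑ r ∈ s, f r :=
    by rw [sum_map]; rfl
  have hcard : (#sᶜ : ℝ) = m - n := by simp [s, card_compl, Nat.cast_sub hnm]
  refine ⟨fun i j hij => ?_, fun i => ?_⟩
  · simp_rw [hdiv]
    rw [← sum_div, abs_div, Nat.abs_cast, hsum fun r => H r _ * H r _, ← hcard]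
    gcongr
    refine abs_sum_le_card_compl_of_sum_eq_zero (fun r => ?_) ?_ s
    · rw [abs_mul, habs, habs, one_mul]
    · exact Matrix.sum_mul_col_eq_zero_of_mul_transpose hHad ((Fin.castLE_injective hnm).ne hij)
  · simp_rw [div_pow, Real.sq_sqrt (Nat.cast_nonneg _), ← sq_abs (H _ _), habs]
    simp [div_eq_mul_inv]
end
end

section
/- There exists a constant C > 0 such that for every n ≥ 1 and every Hadamard matrix H of order m with n ≤ m ≤ n + 3, the following holds: let U be the top-left n×n block of H divided by √m, and let Q be the orthogonal matrix obtained from the QR factorization U = Q·R (equivalently, the columns of Q are the Gram–Schmidt orthonormalization of the columns of U, with R upper triangular having positive diagonal). Then |Q_ij| ≤ C/√n for all 1 ≤ i, j ≤ n. -/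
/-!
Fix a column `j` of `Q`, pad it by zeros to a unit vector `q ∈ ℝᵐ` and put `ρ = Hᵀ q`, so that
`H ρ = m q` and `‖ρ‖² = m`. Since `Qᵀ U = R` is upper triangular, `ρ` vanishes before `j` and
`ρ_j = √m R_jj =: P`, hence `P ≤ √m`. Since `Q = U R⁻¹`, the vector `q` agrees with `H b`, where `b`
is supported on `{i ≤ j}`, except on the at most three rows `D` outside the block. Therefore
`ρ = m b - Hᵀ w` with `w` supported on `D`: beyond `j`, `ρ` is a combination of at most three
`±1` rows of `H`. The rows `a ∈ D`, on which `q` vanishes, give `⟨ρ_{>j}, H_a⟩ = -P H_aj`, and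
sorting the coordinates by their sign pattern shows that such a combination has `ℓ¹` norm at
most `3P`. Finally `m |q_k| = |(H ρ)_k| ≤ P + 3P`, so `|Q_kj| ≤ 4P/m ≤ 4/√m ≤ 4/√n`.
-/

open Finset Matrix Function

theorem weighted_abs_sum_le_three_mul {κ₁ κ₂ κ₃ κ₄ γ₁ γ₂ γ₃ γ₄ P : ℝ}
    (hκ₁ : 0 ≤ κ₁) (hκ₂ : 0 ≤ κ₂) (hκ₃ : 0 ≤ κ₃) (hκ₄ : 0 ≤ κ₄) (hP : 0 ≤ P)
    (h₁ : κ₁ * γ₁ + κ₂ * γ₂ + κ₃ * γ₃ + κ₄ * γ₄ = P)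
    (h₂ : κ₁ * γ₁ + κ₂ * γ₂ - κ₃ * γ₃ - κ₄ * γ₄ = P)
    (h₃ : κ₁ * γ₁ - κ₂ * γ₂ + κ₃ * γ₃ - κ₄ * γ₄ = P)
    (hγ : γ₁ + γ₄ = γ₂ + γ₃) :
    κ₁ * |γ₁| + κ₂ * |γ₂| + κ₃ * |γ₃| + κ₄ * |γ₄| ≤ 3 * P := by
  have e₁ : κ₁ * γ₁ = P - κ₂ * γ₂ := by linarith
  have e₃ : κ₃ * γ₃ = κ₂ * γ₂ := by linarith
  have e₄ : κ₄ * γ₄ = -(κ₂ * γ₂) := by linarith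
  -- otherwise `γ₁ + γ₄` and `γ₂ + γ₃` would have opposite signs
  have hσ : 0 ≤ κ₂ * γ₂ ∧ κ₂ * γ₂ ≤ P := by
    constructor <;> by_contra! h
    · have := neg_of_mul_neg_right (b := γ₂) h hκ₂
      have := neg_of_mul_neg_right (b := γ₃) (by linarith) hκ₃
      have := pos_of_mul_pos_right (b := γ₄) (by linarith) hκ₄
      have := pos_of_mul_pos_right (b := γ₁) (by linarith) hκ₁
      linarith
    · have := pos_of_mul_pos_right (b := γ₂) (by linarith) hκ₂
      have := pos_of_mul_pos_right (b := γ₃) (by linarith) hκ₃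
      have := neg_of_mul_neg_right (b := γ₄) (by linarith) hκ₄
      have := neg_of_mul_neg_right (b := γ₁) (by linarith) hκ₁
      linarith
  have habs : ∀ {κ γ : ℝ}, 0 ≤ κ → κ * |γ| = |κ * γ| := fun h => by
    rw [abs_mul, abs_of_nonneg h]
  rw [habs hκ₁, habs hκ₂, habs hκ₃, habs hκ₄, e₁, e₃, e₄, abs_neg, abs_of_nonneg hσ.1,
    abs_of_nonneg (sub_nonneg.2 hσ.2)]
  linarith

theorem sum_comp_eq_of_mapsTo_signs {ι : Type*} (T : Finset ι) (π : ι → ℝ × ℝ)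
    (hπ : ∀ i ∈ T, π i ∈ ({(1, 1), (1, -1), (-1, 1), (-1, -1)} : Finset (ℝ × ℝ)))
    (F : ℝ × ℝ → ℝ) :
    ∑ i ∈ T, F (π i) = #{i ∈ T | π i = (1, 1)} * F (1, 1) + #{i ∈ T | π i = (1, -1)} * F (1, -1)
      + #{i ∈ T | π i = (-1, 1)} * F (-1, 1) + #{i ∈ T | π i = (-1, -1)} * F (-1, -1) := by
  classical
  have hfiber : ∀ p, ∑ i ∈ T with π i = p, F (π i) = #{i ∈ T | π i = p} * F p := fun p => by
    rw [sum_congr rfl fun i hi => congrArg F (mem_filter.1 hi).2, sum_const, nsmul_eq_mul]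
  rw [← sum_fiberwise_of_maps_to hπ, sum_insert (by norm_num), sum_insert (by norm_num),
    sum_pair (by norm_num)]
  simp only [hfiber]
  ring

theorem sum_abs_add_add_le_three_mul {ι : Type*} (T : Finset ι) (c₁ c₂ c₃ : ι → ℝ)
    (hc₁ : ∀ i ∈ T, c₁ i = 1 ∨ c₁ i = -1) (hc₂ : ∀ i ∈ T, c₂ i = 1 ∨ c₂ i = -1)
    (hc₃ : ∀ i ∈ T, c₃ i = 1 ∨ c₃ i = -1) (x₁ x₂ x₃ : ℝ) {P : ℝ} (hP : 0 ≤ P)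
    (h₁ : ∑ i ∈ T, (x₁ * c₁ i + x₂ * c₂ i + x₃ * c₃ i) * c₁ i = P)
    (h₂ : ∑ i ∈ T, (x₁ * c₁ i + x₂ * c₂ i + x₃ * c₃ i) * c₂ i = P)
    (h₃ : ∑ i ∈ T, (x₁ * c₁ i + x₂ * c₂ i + x₃ * c₃ i) * c₃ i = P) :
    ∑ i ∈ T, |x₁ * c₁ i + x₂ * c₂ i + x₃ * c₃ i| ≤ 3 * P := by
  set π : ι → ℝ × ℝ := fun i => (c₁ i * c₂ i, c₁ i * c₃ i)
  set γ : ℝ × ℝ → ℝ := fun p => x₁ + p.1 * x₂ + p.2 * x₃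
  have hπ : ∀ i ∈ T, π i ∈ ({(1, 1), (1, -1), (-1, 1), (-1, -1)} : Finset (ℝ × ℝ)) := by
    intro i hi
    rcases hc₁ i hi with h | h <;> rcases hc₂ i hi with h' | h' <;>
      rcases hc₃ i hi with h'' | h'' <;> simp [π, h, h', h'']
  -- after multiplying by `c₁ i`, every quantity depends on `i` only through its sign pattern
  have hpattern : ∀ i ∈ T,
      (x₁ * c₁ i + x₂ * c₂ i + x₃ * c₃ i) * c₁ i = γ (π i) ∧
      (x₁ * c₁ i + x₂ * c₂ i + x₃ * c₃ i) * c₂ i = (π i).1 * γ (π i) ∧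
      (x₁ * c₁ i + x₂ * c₂ i + x₃ * c₃ i) * c₃ i = (π i).2 * γ (π i) ∧
      |x₁ * c₁ i + x₂ * c₂ i + x₃ * c₃ i| = |γ (π i)| := by
    intro i hi
    rcases hc₁ i hi with h | h <;> simp only [π, γ, h]
    · exact ⟨by ring, by ring, by ring, by ring_nf⟩
    · exact ⟨by ring, by ring, by ring, by rw [← abs_neg]; ring_nf⟩
  rw [sum_congr rfl fun i hi => (hpattern i hi).1, sum_comp_eq_of_mapsTo_signs T π hπ] at h₁
  rw [sum_congr rfl fun i hi => (hpattern i hi).2.1,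
    sum_comp_eq_of_mapsTo_signs T π hπ (fun p => p.1 * γ p)] at h₂
  rw [sum_congr rfl fun i hi => (hpattern i hi).2.2.1,
    sum_comp_eq_of_mapsTo_signs T π hπ (fun p => p.2 * γ p)] at h₃
  rw [sum_congr rfl fun i hi => (hpattern i hi).2.2.2,
    sum_comp_eq_of_mapsTo_signs T π hπ (fun p => |γ p|)]
  simp only [γ] at h₁ h₂ h₃ ⊢
  norm_num at h₂ h₃
  exact weighted_abs_sum_le_three_mul (Nat.cast_nonneg _) (Nat.cast_nonneg _)
    (Nat.cast_nonneg _) (Nat.cast_nonneg _) hP (by linarith) (by linarith) (by linarith)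
    (by ring)

theorem sum_abs_sum_le_three_mul_of_card_le_three {ι κ : Type*} [DecidableEq κ] (T : Finset ι)
    (D : Finset κ) (hD : #D ≤ 3) (c : κ → ι → ℝ) (hc : ∀ a ∈ D, ∀ i ∈ T, c a i = 1 ∨ c a i = -1)
    (x : κ → ℝ) {P : ℝ} (hP : 0 ≤ P)
    (h : ∀ a ∈ D, ∑ i ∈ T, (∑ b ∈ D, x b * c b i) * c a i = P) :
    ∑ i ∈ T, |∑ b ∈ D, x b * c b i| ≤ 3 * P := by
  obtain hD | hD | hD | hD : #D = 0 ∨ #D = 1 ∨ #D = 2 ∨ #D = 3 := by omega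
  · simp [card_eq_zero.1 hD, hP]
  · obtain ⟨a, rfl⟩ := card_eq_one.1 hD
    simp only [mem_singleton, forall_eq, sum_singleton] at hc h ⊢
    simpa using sum_abs_add_add_le_three_mul T (c a) (c a) (c a) hc hc hc (x a) 0 0 hP
      (by simpa using h) (by simpa using h) (by simpa using h)
  · obtain ⟨a, b, hab, rfl⟩ := card_eq_two.1 hD
    simp only [mem_insert, mem_singleton, forall_eq_or_imp, forall_eq, sum_pair hab] at hc h ⊢
    simpa using sum_abs_add_add_le_three_mul T (c a) (c b) (c a) hc.1 hc.2 hc.1 (x a) (x b) 0 hP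
      (by simpa using h.1) (by simpa using h.2) (by simpa using h.1)
  · obtain ⟨a, b, d, hab, had, hbd, rfl⟩ := card_eq_three.1 hD
    simp only [mem_insert, mem_singleton, forall_eq_or_imp, forall_eq, ← add_assoc,
      sum_insert (show a ∉ ({b, d} : Finset κ) by simp [hab, had]), sum_pair hbd] at hc h ⊢
    exact sum_abs_add_add_le_three_mul T (c a) (c b) (c d) hc.1 hc.2.1 hc.2.2 (x a) (x b) (x d)
      hP h.1 h.2.1 h.2.2

theorem sum_eq_add_sum_gt_of_eq_zero {ι M : Type*} [Fintype ι] [LinearOrder ι] [AddCommMonoid M]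
    {v : ι → M} {j : ι} (hv : ∀ i < j, v i = 0) : ∑ i, v i = v j + ∑ i with j < i, v i := by
  rw [← sum_filter_not_add_sum_filter univ (j < ·)]
  congr 1
  refine sum_eq_single_of_mem j (by simp) fun i hi hij => hv i ?_
  simp only [not_lt, mem_filter, mem_univ, true_and] at hi
  exact lt_of_le_of_ne hi hij

namespace Matrix

section Square

variable {ι : Type*} [Fintype ι] [DecidableEq ι] {H : Matrix ι ι ℝ} {r : ℝ}

theorem transpose_mul_self_eq_smul_one_s13 (hr : r ≠ 0) (hHH : H * Hᵀ = r • 1) :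
    Hᵀ * H = r • 1 := by
  have : (r⁻¹ • Hᵀ) * H = 1 := by
    rw [mul_eq_one_comm, Matrix.mul_smul, hHH, smul_smul, inv_mul_cancel₀ hr, one_smul]
  rw [← this, smul_mul, smul_smul, mul_inv_cancel₀ hr, one_smul]

theorem mulVec_vecMul_eq_smul (hHH : H * Hᵀ = r • 1) (q : ι → ℝ) : H *ᵥ (q ᵥ* H) = r • q := by
  rw [← mulVec_transpose, mulVec_mulVec, hHH, smul_mulVec, one_mulVec]

theorem vecMul_dotProduct_vecMul (hHH : H * Hᵀ = r • 1) (q : ι → ℝ) :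
    (q ᵥ* H) ⬝ᵥ (q ᵥ* H) = r * (q ⬝ᵥ q) := by
  rw [← dotProduct_mulVec, mulVec_vecMul_eq_smul hHH, dotProduct_smul, smul_eq_mul]

theorem vecMul_eq_smul_sub (hHtH : Hᵀ * H = r • 1) (q b : ι → ℝ) :
    q ᵥ* H = r • b - (H *ᵥ b - q) ᵥ* H := by
  rw [sub_vecMul, ← vecMul_transpose, vecMul_vecMul, hHtH, vecMul_smul, vecMul_one]
  abel

end Square

section Ordered

variable {ι : Type*} [Fintype ι] [LinearOrder ι] {H : Matrix ι ι ℝ} {r : ℝ}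

theorem mulVec_apply_eq_add_sum_gt {ρ : ι → ℝ} {j : ι} (hρ : ∀ i < j, ρ i = 0) (k : ι) :
    (H *ᵥ ρ) k = H k j * ρ j + ∑ i with j < i, H k i * ρ i :=
  sum_eq_add_sum_gt_of_eq_zero fun i hi => by simp [hρ i hi]

theorem sum_abs_vecMul_gt_le_three_mul (hH : ∀ a i, H a i = 1 ∨ H a i = -1)
    (hHH : H * Hᵀ = r • 1) (hHtH : Hᵀ * H = r • 1) {D : Finset ι} (hD : #D ≤ 3)
    {q b : ι → ℝ} {j : ι} (hqD : ∀ a ∈ D, q a = 0) (hq : ∀ a ∉ D, q a = (H *ᵥ b) a)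
    (hb : ∀ i, j < i → b i = 0) (hρ : ∀ i < j, (q ᵥ* H) i = 0) (hP : 0 ≤ (q ᵥ* H) j) :
    ∑ i with j < i, |(q ᵥ* H) i| ≤ 3 * (q ᵥ* H) j := by
  set ρ := q ᵥ* H
  set w := H *ᵥ b - q
  have hsq : ∀ a i, H a i * H a i = 1 := fun a i => by rcases hH a i with h | h <;> simp [h]
  have hρw : ∀ i, j < i → ρ i = -(w ᵥ* H) i := fun i hi => by
    simp [ρ, w, vecMul_eq_smul_sub hHtH q b, hb i hi]
  have hwH : ∀ i, (w ᵥ* H) i = ∑ a ∈ D, w a * H a i := fun i =>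
    (sum_subset (subset_univ D) fun a _ ha => by simp [w, hq a ha]).symm
  have hrow : ∀ a ∈ D, ∑ i with j < i, (w ᵥ* H) i * H a i = ρ j * H a j := fun a ha => by
    have h := congrFun (mulVec_vecMul_eq_smul hHH q) a
    rw [mulVec_apply_eq_add_sum_gt hρ, Pi.smul_apply, hqD a ha, smul_zero,
      sum_congr rfl fun i hi => by rw [hρw i (mem_filter.1 hi).2]] at h
    simp only [mul_comm (H a _), neg_mul, sum_neg_distrib] at h
    linarith
  -- normalise the rows of `D` so that they all correlate with `w ᵥ* H` to exactly `ρ j`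
  have hc : ∀ a ∈ D, ∀ i ∈ ({i | j < i} : Finset ι),
      H a j * H a i = 1 ∨ H a j * H a i = -1 := fun a _ i _ => by
    rcases hH a j with h | h <;> rcases hH a i with h' | h' <;> simp [h, h']
  have hx : ∀ i, ∑ a ∈ D, w a * H a j * (H a j * H a i) = (w ᵥ* H) i := fun i => by
    rw [hwH]
    exact sum_congr rfl fun a _ => by linear_combination w a * H a i * hsq a j
  have key := sum_abs_sum_le_three_mul_of_card_le_three _ D hD (fun a i => H a j * H a i) hc
    (fun a => w a * H a j) hP fun a ha => by
      calc ∑ i with j < i, (∑ b ∈ D, w b * H b j * (H b j * H b i)) * (H a j * H a i)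
          = H a j * ∑ i with j < i, (w ᵥ* H) i * H a i := by
            simp only [hx, mul_sum]
            exact sum_congr rfl fun i _ => by ring
        _ = ρ j := by rw [hrow a ha]; linear_combination ρ j * hsq a j
  simp only [hx] at key
  rwa [sum_congr rfl fun i hi => by rw [hρw i (mem_filter.1 hi).2, abs_neg]]

theorem abs_apply_le_four_div_sqrt (hH : ∀ a i, H a i = 1 ∨ H a i = -1) (hr : 0 < r)
    (hHH : H * Hᵀ = r • 1) {D : Finset ι} (hD : #D ≤ 3) {q b : ι → ℝ} {j : ι}
    (hq₁ : q ⬝ᵥ q = 1) (hqD : ∀ a ∈ D, q a = 0) (hq : ∀ a ∉ D, q a = (H *ᵥ b) a)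
    (hb : ∀ i, j < i → b i = 0) (hρ : ∀ i < j, (q ᵥ* H) i = 0) (hP : 0 < (q ᵥ* H) j)
    (k : ι) : |q k| ≤ 4 / √r := by
  set ρ := q ᵥ* H
  have htail := sum_abs_vecMul_gt_le_three_mul hH hHH
    (transpose_mul_self_eq_smul_one_s13 hr.ne' hHH) hD hqD hq hb hρ hP.le
  have habs : ∀ a i, |H a i| = 1 := fun a i => by rcases hH a i with h | h <;> simp [h]
  have hrq : r * |q k| ≤ 4 * ρ j :=
    calc r * |q k| = |H k j * ρ j + ∑ i with j < i, H k i * ρ i| := by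
          rw [← mulVec_apply_eq_add_sum_gt hρ, mulVec_vecMul_eq_smul hHH, Pi.smul_apply,
            smul_eq_mul, abs_mul, abs_of_pos hr]
      _ ≤ |H k j * ρ j| + ∑ i with j < i, |H k i * ρ i| :=
          (abs_add_le _ _).trans (by gcongr; exact abs_sum_le_sum_abs _ _)
      _ ≤ 4 * ρ j := by simp only [abs_mul, habs, one_mul, abs_of_pos hP]; linarith
  have hρr : ρ j ≤ √r := by
    rw [Real.le_sqrt hP.le hr.le, sq, ← mul_one r, ← hq₁, ← vecMul_dotProduct_vecMul hHH]
    exact single_le_sum (f := fun i => ρ i * ρ i) (fun i _ => mul_self_nonneg _) (mem_univ j)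
  rw [le_div_iff₀ (Real.sqrt_pos.2 hr)]
  nlinarith [Real.mul_self_sqrt hr.le, abs_nonneg (q k)]

end Ordered

end Matrix

section ExtendByZero

variable {κ ι R : Type*} [Fintype κ] [Fintype ι] [CommSemiring R] {e : κ → ι}

theorem sum_mul_extend_zero (he : Injective e) (f : ι → R) (v : κ → R) :
    ∑ a, f a * extend e v 0 a = ∑ k, f (e k) * v k :=
  (Fintype.sum_of_injective e he _ _
    (fun a ha => by rw [extend_apply' _ _ _ (by simpa using ha), Pi.zero_apply, mul_zero])
    fun k => by rw [he.extend_apply]).symm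

theorem mulVec_extend_zero_apply (he : Injective e) (H : Matrix ι ι R) (v : κ → R) (k : κ) :
    (H *ᵥ extend e v 0) (e k) = (H.submatrix e e *ᵥ v) k :=
  sum_mul_extend_zero he _ v

theorem extend_zero_vecMul_apply (he : Injective e) (H : Matrix ι ι R) (v : κ → R) (i : κ) :
    (extend e v 0 ᵥ* H) (e i) = (v ᵥ* H.submatrix e e) i := by
  simp only [vecMul, dotProduct, mul_comm (extend e v 0 _), mul_comm (v _)]
  exact sum_mul_extend_zero he _ v

theorem extend_zero_dotProduct_self (he : Injective e) (v : κ → R) :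
    extend e v 0 ⬝ᵥ extend e v 0 = v ⬝ᵥ v := by
  simp only [dotProduct]
  rw [sum_mul_extend_zero he]
  simp [he.extend_apply]

end ExtendByZero

theorem extend_zero_eq_zero_of_gt {κ ι R : Type*} [LinearOrder κ] [LinearOrder ι] [Zero R]
    {e : κ → ι} (he : StrictMono e) {v : κ → R} {j : κ} (hv : ∀ i, j < i → v i = 0) {i : ι}
    (hi : e j < i) : extend e v 0 i = 0 := by
  by_cases hir : ∃ i', e i' = i
  · obtain ⟨i', rfl⟩ := hir
    rw [he.injective.extend_apply]
    exact hv i' (he.lt_iff_lt.1 hi)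
  · exact extend_apply' _ _ _ hir

theorem Matrix.IsUpperTriangular.inv {ι K : Type*} [Fintype ι] [LinearOrder ι] [Field K]
    {R : Matrix ι ι K} (hR : R.IsUpperTriangular) : R⁻¹.IsUpperTriangular := by
  by_cases hRu : IsUnit R.det
  · have := invertibleOfIsUnitDet R hRu
    exact blockTriangular_inv_of_blockTriangular hR
  · rw [nonsing_inv_apply_not_isUnit R hRu]
    exact blockTriangular_zero

theorem Matrix.IsUpperTriangular.isUnit_det {ι K : Type*} [Fintype ι] [LinearOrder ι] [Field K]
    {R : Matrix ι ι K} (hR : R.IsUpperTriangular) (hdiag : ∀ i, R i i ≠ 0) : IsUnit R.det := by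
  rw [det_of_isUpperTriangular hR, isUnit_iff_ne_zero]
  exact prod_ne_zero_iff.2 fun i _ => hdiag i

theorem abs_le_four_div_sqrt_of_qr_hadamard_block {n m : ℕ} (hnm : n ≤ m) (hmn : m ≤ n + 3)
    {H : Matrix (Fin m) (Fin m) ℝ} (hH : ∀ i j, H i j = 1 ∨ H i j = -1)
    (hHH : H * Hᵀ = (m : ℝ) • 1) {Q R : Matrix (Fin n) (Fin n) ℝ} (hQ : Q * Qᵀ = 1)
    (hR : ∀ i j : Fin n, (j : ℕ) < (i : ℕ) → R i j = 0) (hRdiag : ∀ i, 0 < R i i)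
    (hU : (Matrix.of fun i j : Fin n => H (Fin.castLE hnm i) (Fin.castLE hnm j) / √m) = Q * R)
    (k j : Fin n) : |Q k j| ≤ 4 / √m := by
  have hm : (0 : ℝ) < m := Nat.cast_pos.2 (k.pos.trans_le hnm)
  set s := √m
  have hs : 0 < s := Real.sqrt_pos.2 hm
  set e := Fin.castLE hnm
  have he : Injective e := Fin.castLE_injective hnm
  have hA : H.submatrix e e = s • (Q * R) := by
    rw [← hU]; ext; simp [mul_div_cancel₀ _ hs.ne']
  have hRu : IsUnit R.det := IsUpperTriangular.isUnit_det hR fun i => (hRdiag i).ne'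
  have hQR : H.submatrix e e * (s⁻¹ • R⁻¹) = Q := by
    rw [hA, smul_mul_smul_comm, mul_inv_cancel₀ hs.ne', one_smul, Matrix.mul_assoc,
      mul_nonsing_inv R hRu, Matrix.mul_one]
  have hQtQ : Qᵀ * Q = 1 := mul_eq_one_comm.1 hQ
  have hQA : Qᵀ * H.submatrix e e = s • R := by
    rw [hA, Matrix.mul_smul, ← Matrix.mul_assoc, hQtQ, Matrix.one_mul]
  set q := extend e (fun k => Q k j) 0
  set b := extend e (fun i => (s⁻¹ • R⁻¹) i j) 0
  have hqe : ∀ k, q (e k) = Q k j := he.extend_apply _ _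
  have hρ : ∀ i, (q ᵥ* H) (e i) = s * R j i := fun i => by
    rw [extend_zero_vecMul_apply he]; exact congrFun₂ hQA j i
  rw [← hqe k]
  refine abs_apply_le_four_div_sqrt hH hm hHH (D := (univ.map ⟨e, he⟩)ᶜ) ?_ (b := b) (j := e j) ?_
    (fun a ha => extend_apply' (f := e) _ _ _ (by simpa using ha)) ?_ ?_ ?_
    (by rw [hρ]; exact mul_pos hs (hRdiag j)) _
  · rw [card_compl, card_map, card_univ, Fintype.card_fin, Fintype.card_fin]
    omega
  · rw [extend_zero_dotProduct_self he]
    exact (congrFun₂ hQtQ j j).trans (one_apply_eq j)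
  · intro a ha
    obtain ⟨k', rfl⟩ : ∃ k', e k' = a := by simpa using ha
    rw [hqe, mulVec_extend_zero_apply he]
    exact (congrFun₂ hQR k' j).symm
  · exact fun i => extend_zero_eq_zero_of_gt (Fin.strictMono_castLE hnm)
      fun i' hi' => by simp [IsUpperTriangular.inv hR hi']
  · intro i hi
    obtain ⟨i', rfl⟩ : ∃ i', e i' = i := ⟨⟨i, (Fin.lt_def.1 hi).trans j.2⟩, rfl⟩
    rw [hρ, hR j i' hi, mul_zero]

/-- There is an absolute constant `C > 0` such that for every `n ≥ 1` and every Hadamard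
matrix `H` of order `m` with `n ≤ m ≤ n + 3`, the orthogonal factor `Q` of the QR
factorization (with `R` upper triangular with positive diagonal) of the normalized
top-left `n × n` block `U = H_{[1:n,1:n]}/√m` has all entries bounded by `C/√n`. -/
theorem stmt13 : ∃ C : ℝ, 0 < C ∧ ∀ (n m : ℕ), 1 ≤ n → ∀ (hnm : n ≤ m), m ≤ n + 3 →
    ∀ H : Matrix (Fin m) (Fin m) ℝ,
      (∀ i j, H i j = 1 ∨ H i j = -1) →
      H * H.transpose = (m : ℝ) • (1 : Matrix (Fin m) (Fin m) ℝ) →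
      ∀ Q R : Matrix (Fin n) (Fin n) ℝ,
        Q * Q.transpose = 1 →
        (∀ i j : Fin n, (j : ℕ) < (i : ℕ) → R i j = 0) →
        (∀ i : Fin n, 0 < R i i) →
        (Matrix.of fun i j : Fin n =>
            H (Fin.castLE hnm i) (Fin.castLE hnm j) / Real.sqrt m) = Q * R →
        ∀ i j : Fin n, |Q i j| ≤ C / Real.sqrt n := by
  refine ⟨4, by norm_num, fun n m hn hnm hmn H hH hHH Q R hQ hR hRdiag hU k j => ?_⟩
  have hn' : (0 : ℝ) < n := by exact_mod_cast hn
  exact (abs_le_four_div_sqrt_of_qr_hadamard_block hnm hmn hH hHH hQ hR hRdiag hU k j).trans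
    (div_le_div_of_nonneg_left (by norm_num) (Real.sqrt_pos.2 hn')
      (Real.sqrt_le_sqrt (by exact_mod_cast hnm)))
end

section
/- Let k ≥ 1 and n = 2^{k−1}. Index the rows of an n×n matrix A by the vectors v ∈ {−1,1}^{k−1}, and let the row a_v have first coordinate 1/√k, coordinates 2 through k equal to v_1/√k, …, v_{k−1}/√k, and all remaining coordinates 0 (so each row has unit Euclidean norm). Then for every x ∈ {−1,1}^n one has ‖Ax‖_∞ = √k, and consequently β(A) = √k = √(log₂(n) + 1). -/
open Finset

noncomputable section
open scoped Classical

/-!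
Each row of `A` is `1/√k` times a `±1` pattern on the first `k` coordinates, so its `ℓ¹` norm is
`k/√k = √k`, which bounds `|⟨a_v, x⟩|` for every `x ∈ {-1,1}^n`. The bound is attained by the row
whose sign pattern is `v_i = x₁ x_{i+1}`: then every term of `⟨a_v, x⟩` equals `x₁/√k`.
-/

open Matrix

@[simp] lemma abs_sgn (b : Bool) : |sgn b| = 1 := by
  cases b <;> simp [sgn]

lemma sgn_beq_mul_sgn (a b : Bool) : sgn (a == b) * sgn b = sgn a := by
  cases a <;> cases b <;> simp [sgn]

lemma sgn_injective : Function.Injective sgn := by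
  intro a b
  cases a <;> cases b <;> norm_num [sgn]

lemma card_cube (n : ℕ) : #(cube n) = 2 ^ n := by
  rw [cube, card_image_of_injective _ fun ε ε' h => funext fun i => sgn_injective (congrFun h i)]
  simp

lemma badBeta_eq_of_forall_norm_eq {n : ℕ} {A : Matrix (Fin n) (Fin n) ℝ} {c : ℝ}
    (h : ∀ x ∈ cube n, ‖A *ᵥ x‖ = c) : badBeta A = c := by
  rw [badBeta, sum_congr rfl h, sum_const, card_cube, nsmul_eq_mul]
  push_cast
  field_simp

section RowNorms

variable {ι κ : Type*} [Fintype κ] (A : Matrix ι κ ℝ)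

lemma abs_mulVec_le_sum_abs {x : κ → ℝ} (hx : ∀ j, |x j| ≤ 1) (r : ι) :
    |(A *ᵥ x) r| ≤ ∑ j, |A r j| :=
  calc |(A *ᵥ x) r| = |∑ j, A r j * x j| := rfl
    _ ≤ ∑ j, |A r j * x j| := abs_sum_le_sum_abs _ _
    _ ≤ ∑ j, |A r j| := sum_le_sum fun j _ => by
        rw [abs_mul]
        exact mul_le_of_le_one_right (abs_nonneg _) (hx j)

lemma abs_mulVec_eq_sum_abs_of_aligned {x : κ → ℝ} {r : ι} {t : ℝ} (ht : |t| = 1)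
    (h : ∀ j, A r j * x j = t * |A r j|) : |(A *ᵥ x) r| = ∑ j, |A r j| := by
  rw [mulVec, dotProduct, sum_congr rfl fun j _ => h j, ← mul_sum, abs_mul, ht, one_mul,
    abs_of_nonneg (sum_nonneg fun j _ => abs_nonneg _)]

lemma norm_mulVec_eq_of_abs_apply_eq [Fintype ι] {x : κ → ℝ} {c : ℝ} (hx : ∀ j, |x j| ≤ 1)
    (hrow : ∀ r, ∑ j, |A r j| = c) {r₀ : ι} (hr₀ : |(A *ᵥ x) r₀| = c) : ‖A *ᵥ x‖ = c := by
  have hc : 0 ≤ c := hr₀ ▸ abs_nonneg _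
  refine le_antisymm ((pi_norm_le_iff_of_nonneg hc).mpr fun r => ?_) ?_
  · rw [Real.norm_eq_abs, ← hrow r]
    exact abs_mulVec_le_sum_abs A hx r
  · rw [← hr₀, ← Real.norm_eq_abs]
    exact norm_le_pi_norm (A *ᵥ x) r₀

end RowNorms

/-- Row `r` of `A` is `(1, v₁, …, v_{k-1}, 0, …, 0)/√k` where `v = e r` read as signs. -/
def IsSubcubeMatrix (k : ℕ) {n : ℕ} (e : Fin n ≃ (Fin (k - 1) → Bool))
    (A : Matrix (Fin n) (Fin n) ℝ) : Prop :=
  ∀ (r j : Fin n),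
    ((j : ℕ) = 0 → A r j = 1 / Real.sqrt k) ∧
    (∀ (h1 : 1 ≤ (j : ℕ)) (h2 : (j : ℕ) ≤ k - 1),
      A r j = sgn (e r ⟨(j : ℕ) - 1, (Nat.sub_lt h1 Nat.one_pos).trans_le h2⟩) / Real.sqrt k) ∧
    (k ≤ (j : ℕ) → A r j = 0)

namespace IsSubcubeMatrix

variable {k n : ℕ} {e : Fin n ≃ (Fin (k - 1) → Bool)} {A : Matrix (Fin n) (Fin n) ℝ}

lemma abs_apply (hA : IsSubcubeMatrix k e A) (r j : Fin n) :
    |A r j| = if (j : ℕ) < k then (√k)⁻¹ else 0 := by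
  obtain ⟨h_first, h_sign, h_tail⟩ := hA r j
  by_cases hjk : (j : ℕ) < k
  · rw [if_pos hjk]
    rcases Nat.eq_zero_or_pos (j : ℕ) with hj | hj
    · rw [h_first hj, one_div, abs_of_nonneg (by positivity)]
    · rw [h_sign hj (by omega), abs_div, abs_sgn, abs_of_nonneg (Real.sqrt_nonneg _), one_div]
  · rw [if_neg hjk, h_tail (by omega), abs_zero]

lemma sum_abs_row (hA : IsSubcubeMatrix k e A) (hkn : k ≤ n) (r : Fin n) :
    ∑ j, |A r j| = √k := by
  simp_rw [hA.abs_apply]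
  rw [sum_ite, sum_const_zero, add_zero, sum_const, Fin.card_filter_val_lt, min_eq_right hkn,
    nsmul_eq_mul, ← div_eq_mul_inv, Real.div_sqrt]

lemma exists_row_aligned (hA : IsSubcubeMatrix k e A) (hk : 1 ≤ k) (hkn : k ≤ n)
    (ε : Fin n → Bool) : ∃ r, ∀ j, A r j * sgn (ε j) = sgn (ε ⟨0, by omega⟩) * |A r j| := by
  set v : Fin (k - 1) → Bool := fun i => ε ⟨0, by omega⟩ == ε ⟨i + 1, by omega⟩
  refine ⟨e.symm v, fun j => ?_⟩
  obtain ⟨h_first, h_sign, h_tail⟩ := hA (e.symm v) j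
  rw [hA.abs_apply]
  by_cases hjk : (j : ℕ) < k
  · rw [if_pos hjk]
    rcases Nat.eq_zero_or_pos (j : ℕ) with hj | hj
    · have hj₀ : j = ⟨0, by omega⟩ := Fin.ext hj
      rw [h_first hj, ← hj₀]
      ring
    · have hj_succ : (⟨(j : ℕ) - 1 + 1, by omega⟩ : Fin n) = j := Fin.ext (by simp; omega)
      rw [h_sign hj (by omega), Equiv.apply_symm_apply, div_mul_eq_mul_div]
      simp only [v, hj_succ, sgn_beq_mul_sgn]
      ring
  · rw [if_neg hjk, h_tail (by omega)]
    ring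

lemma norm_mulVec_eq (hA : IsSubcubeMatrix k e A) (hk : 1 ≤ k) (hkn : k ≤ n) {x : Fin n → ℝ}
    (hx : x ∈ cube n) : ‖A *ᵥ x‖ = √k := by
  obtain ⟨ε, -, rfl⟩ := mem_image.mp hx
  obtain ⟨r, hr⟩ := hA.exists_row_aligned hk hkn ε
  refine norm_mulVec_eq_of_abs_apply_eq A (fun j => (abs_sgn _).le) (hA.sum_abs_row hkn)
    (r₀ := r) ?_
  rw [abs_mulVec_eq_sum_abs_of_aligned A (abs_sgn _) hr, hA.sum_abs_row hkn r]

end IsSubcubeMatrix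

/-- The tree/subcube construction: for `n = 2^{k-1}` with rows indexed (via a bijection `e`)
by sign vectors `v ∈ {±1}^{k-1}`, where row `v` is `(1/√k, v₁/√k, …, v_{k-1}/√k, 0, …, 0)`,
every hypercube vertex satisfies `‖Ax‖_∞ = √k`, hence `β(A) = √k = √(log₂ n + 1)`. -/
theorem stmt18 (k : ℕ) (hk : 1 ≤ k) (n : ℕ) (hn : n = 2 ^ (k - 1))
    (e : Fin n ≃ (Fin (k - 1) → Bool))
    (A : Matrix (Fin n) (Fin n) ℝ)
    (hA : ∀ (r j : Fin n),
      ((j : ℕ) = 0 → A r j = 1 / Real.sqrt k) ∧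
      (∀ (h1 : 1 ≤ (j : ℕ)) (h2 : (j : ℕ) ≤ k - 1),
        A r j = sgn (e r ⟨(j : ℕ) - 1, by omega⟩) / Real.sqrt k) ∧
      (k ≤ (j : ℕ) → A r j = 0)) :
    (∀ x ∈ cube n, ‖A.mulVec x‖ = Real.sqrt k) ∧
    badBeta A = Real.sqrt k ∧
    badBeta A = Real.sqrt (Real.logb 2 n + 1) := by
  have hkn : k ≤ n := by
    have := Nat.lt_two_pow_self (n := k - 1)
    omega
  have hnorm : ∀ x ∈ cube n, ‖A *ᵥ x‖ = √k := fun _ hx =>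
    IsSubcubeMatrix.norm_mulVec_eq hA hk hkn hx
  have hbeta : badBeta A = √k := badBeta_eq_of_forall_norm_eq hnorm
  refine ⟨hnorm, hbeta, hbeta.trans ?_⟩
  rw [hn, Nat.cast_pow, Nat.cast_ofNat, Real.logb_pow, Real.logb_self_eq_one one_lt_two, mul_one,
    ← Nat.cast_add_one, Nat.sub_add_cancel hk]
end
end
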